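/- Let G be a finite simple graph with two distinct non-adjacent vertices u, v and subsets L, R ⊆ V(G) with L ∪ R = V(G), L ∩ R = {u, v}, such that every edge of G has both endpoints in L or both endpoints in R; index cuts of G, of G[L], and of G[L]+uv by subsets containing the base vertex u. Let C₁, …, C_m and C₁', …, C_m' be cut index sets of G with Cᵢ ∩ R = Cᵢ' ∩ R for all i. If ∏_{i=1}^m q_{Cᵢ∩L} − ∏_{i=1}^m q_{Cᵢ'∩L} belongs to the cut ideal I_{G[L]+uv}, then ∏_{i=1}^m q_{Cᵢ} − ∏_{i=1}^m q_{Cᵢ'} belongs to the cut ideal I_G. -/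

import Mathlib

/-!
Under `φ_G`, `q_C` goes to the monomial `∏_{e ∈ E} x_{e, [e ∈ δ(C)]}`. Split `E` into the edges
inside `L` and the others, which by hypothesis lie inside `R`. The factor over the edges inside
`R` only sees `C ∩ R`, so it is the same for `Cᵢ` and `Cᵢ'`. The factor over the edges inside `L`
is the image of `φ_{G[L]}(q_{C ∩ L})` under the renaming `Sym2 L → Sym2 V` of edge variables, so
these factors agree as soon as the restricted binomial lies in `I_{G[L]}`. Finally
`I_{G[L]+uv} ⊆ I_{G[L]}`, because sending the variables of the edge `uv` to `1` turns
`φ_{G[L]+uv}` into `φ_{G[L]}`.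
-/

open MvPolynomial

noncomputable section

/-- `sep A e` is `true` iff the edge `e` has exactly one endpoint in `A`. -/
def sep {V : Type} [DecidableEq V] (A : Finset V) : Sym2 V → Bool :=
  Sym2.lift ⟨fun a b => (decide (a ∈ A)).xor (decide (b ∈ A)),
    fun _ _ => Bool.xor_comm _ _⟩

/-- The cut map `φ_G : K[q_A : v₀ ∈ A ⊆ V] → K[s_e, t_e : e ∈ E]`, where
`s_e` is the variable `X (e, true)` and `t_e` is the variable `X (e, false)`. -/
def cutMap (K : Type) [Field K] {V : Type} [Fintype V] [DecidableEq V]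
    (G : SimpleGraph V) (v₀ : V) :
    MvPolynomial {A : Finset V // v₀ ∈ A} K →ₐ[K] MvPolynomial (Sym2 V × Bool) K :=
  aeval fun A : {A : Finset V // v₀ ∈ A} =>
    ∏ e ∈ (Set.toFinite G.edgeSet).toFinset, X (e, sep A.1 e)

/-- The cut ideal `I_G`, i.e. the kernel of `φ_G`. -/
def cutIdeal (K : Type) [Field K] {V : Type} [Fintype V] [DecidableEq V]
    (G : SimpleGraph V) (v₀ : V) :
    Ideal (MvPolynomial {A : Finset V // v₀ ∈ A} K) :=
  RingHom.ker (cutMap K G v₀)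

/-- `G + uv`: the graph `G` with the edge `uv` added. -/
def addEdge {V : Type} (G : SimpleGraph V) (u v : V) : SimpleGraph V :=
  G ⊔ SimpleGraph.fromEdgeSet {s(u, v)}

/-- Restriction of a cut index set of `G` (a subset containing the base vertex `u`)
to a cut index set of the induced subgraph on `L`. -/
def resSub {V : Type} [DecidableEq V] (L : Finset V) (u : V) (hu : u ∈ L) :
    {A : Finset V // u ∈ A} → {B : Finset {x : V // x ∈ L} // ⟨u, hu⟩ ∈ B} :=
  fun A => ⟨A.1.subtype (· ∈ L), by simpa using A.2⟩

section

variable {V : Type} [DecidableEq V]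

def cutMonomial (K : Type) [Field K] (s : Finset (Sym2 V)) (A : Finset V) :
    MvPolynomial (Sym2 V × Bool) K :=
  ∏ e ∈ s, X (e, sep A e)

variable {K : Type} [Field K]

theorem cutMonomial_inter_mul_sdiff (s t : Finset (Sym2 V)) (A : Finset V) :
    cutMonomial K (s ∩ t) A * cutMonomial K (s \ t) A = cutMonomial K s A :=
  Finset.prod_inter_mul_prod_sdiff s t _

theorem cutMonomial_congr {s : Finset (Sym2 V)} {A A' : Finset V}
    (h : ∀ e ∈ s, sep A e = sep A' e) : cutMonomial K s A = cutMonomial K s A' :=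
  Finset.prod_congr rfl fun e he => by rw [h e he]

theorem sep_eq_of_inter_eq {A A' R : Finset V} (h : A ∩ R = A' ∩ R) {e : Sym2 V}
    (he : e ∈ R.sym2) : sep A e = sep A' e := by
  induction e using Sym2.ind with
  | _ a b =>
    rw [Finset.mk_mem_sym2_iff] at he
    have hmem : ∀ x ∈ R, x ∈ A ↔ x ∈ A' := fun x hx => by
      simpa [hx] using congrArg (x ∈ ·) h
    simp [sep, hmem a he.1, hmem b he.2]

theorem sep_resSub (L : Finset V) (u : V) (huL : u ∈ L)
    (A : {A : Finset V // u ∈ A}) (e : Sym2 {x : V // x ∈ L}) :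
    sep (resSub L u huL A).1 e = sep A.1 (Sym2.map Subtype.val e) := by
  induction e using Sym2.ind with
  | _ x y => simp [sep, resSub, Finset.mem_subtype]

variable [Fintype V]

theorem cutMap_X (G : SimpleGraph V) (v₀ : V) (A : {A : Finset V // v₀ ∈ A}) :
    cutMap K G v₀ (X A) = cutMonomial K (Set.toFinite G.edgeSet).toFinset A.1 :=
  aeval_X _ _

theorem cutIdeal_antitone (v₀ : V) : Antitone fun H : SimpleGraph V => cutIdeal K H v₀ := by
  classical
  intro H H' h
  let ψ : MvPolynomial (Sym2 V × Bool) K →ₐ[K] MvPolynomial (Sym2 V × Bool) K :=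
    aeval fun p => if p.1 ∈ H.edgeSet then X p else 1
  have hψ : ψ.comp (cutMap K H' v₀) = cutMap K H v₀ := by
    refine algHom_ext fun A => ?_
    have hsub : (Set.toFinite H'.edgeSet).toFinset.filter (· ∈ H.edgeSet)
        = (Set.toFinite H.edgeSet).toFinset := by
      ext e
      simpa using fun he : e ∈ H.edgeSet => SimpleGraph.edgeSet_mono h he
    simp only [AlgHom.comp_apply, cutMap_X, cutMonomial, map_prod, ψ, aeval_X]
    rw [← Finset.prod_filter, hsub]
  intro p hp
  simp only [cutIdeal, RingHom.mem_ker] at hp ⊢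
  rw [← hψ, AlgHom.comp_apply, hp, map_zero]

theorem image_edgeFinset_comap_val (G : SimpleGraph V) (L : Finset V) :
    (Set.toFinite (G.comap (Subtype.val : L → V)).edgeSet).toFinset.image (Sym2.map Subtype.val)
      = (Set.toFinite G.edgeSet).toFinset ∩ L.sym2 := by
  ext e
  induction e using Sym2.ind with
  | _ a b =>
    simp only [Finset.mem_image, Set.Finite.mem_toFinset, Finset.mem_inter,
      Finset.mk_mem_sym2_iff, SimpleGraph.mem_edgeSet]
    constructor
    · rintro ⟨e', he', hmap⟩
      induction e' using Sym2.ind with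
      | _ x y =>
        rw [Sym2.map_mk, Sym2.eq_iff] at hmap
        rw [SimpleGraph.mem_edgeSet, SimpleGraph.comap_adj] at he'
        rcases hmap with ⟨rfl, rfl⟩ | ⟨rfl, rfl⟩
        · exact ⟨he', x.2, y.2⟩
        · exact ⟨he'.symm, y.2, x.2⟩
    · rintro ⟨hab, ha, hb⟩
      exact ⟨s(⟨a, ha⟩, ⟨b, hb⟩), hab, rfl⟩

theorem rename_cutMap_comap_val (G : SimpleGraph V) {L : Finset V} {u : V} (huL : u ∈ L)
    (A : {A : Finset V // u ∈ A}) :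
    rename (Prod.map (Sym2.map Subtype.val) id)
        (cutMap K (G.comap (Subtype.val : L → V)) ⟨u, huL⟩ (X (resSub L u huL A)))
      = cutMonomial K ((Set.toFinite G.edgeSet).toFinset ∩ L.sym2) A.1 := by
  rw [cutMap_X, cutMonomial, cutMonomial, ← image_edgeFinset_comap_val,
    Finset.prod_image fun _ _ _ _ h => Sym2.map.injective Subtype.val_injective h]
  simp only [map_prod, rename_X, Prod.map_apply, id, sep_resSub]

theorem prod_X_sub_prod_X_mem_cutIdeal_of_comap_val {ι : Type*} [Fintype ι]
    (G : SimpleGraph V) {L R : Finset V} {u : V} (huL : u ∈ L)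
    (hE : ∀ a b, G.Adj a b → (a ∈ L ∧ b ∈ L) ∨ (a ∈ R ∧ b ∈ R))
    (C C' : ι → {A : Finset V // u ∈ A}) (hR : ∀ i, (C i).1 ∩ R = (C' i).1 ∩ R)
    (hmem : (∏ i, X (resSub L u huL (C i))) - (∏ i, X (resSub L u huL (C' i))) ∈
      cutIdeal K (G.comap (Subtype.val : L → V)) ⟨u, huL⟩) :
    (∏ i, X (C i)) - (∏ i, X (C' i)) ∈ cutIdeal K G u := by
  rw [cutIdeal, RingHom.mem_ker, map_sub, sub_eq_zero] at hmem ⊢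
  have hL := congrArg (rename (Prod.map (Sym2.map (Subtype.val : L → V)) id)) hmem
  simp only [map_prod, rename_cutMap_comap_val] at hL
  simp only [map_prod, cutMap_X]
  set E := (Set.toFinite G.edgeSet).toFinset
  have hER : ∀ e ∈ E \ L.sym2, e ∈ R.sym2 := by
    intro e he
    induction e using Sym2.ind with
    | _ a b =>
      simp only [Finset.mem_sdiff, Set.Finite.mem_toFinset, SimpleGraph.mem_edgeSet,
        Finset.mk_mem_sym2_iff, E] at he
      exact Finset.mk_mem_sym2_iff.2 ((hE a b he.1).resolve_left he.2)
  have hR' (i : ι) :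
      cutMonomial K (E \ L.sym2) (C i).1 = cutMonomial K (E \ L.sym2) (C' i).1 :=
    cutMonomial_congr fun e he => sep_eq_of_inter_eq (hR i) (hER e he)
  simp only [← cutMonomial_inter_mul_sdiff E L.sym2, Finset.prod_mul_distrib, hL, hR']

end

theorem lift_left_binomial_mem_cutIdeal_general
    (K : Type) [Field K] {V : Type} [Fintype V] [DecidableEq V]
    (G : SimpleGraph V) (u v : V)
    (L R : Finset V)
    (huL : u ∈ L) (hvL : v ∈ L)
    (hE : ∀ a b, G.Adj a b → (a ∈ L ∧ b ∈ L) ∨ (a ∈ R ∧ b ∈ R))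
    (m : ℕ) (C C' : Fin m → {A : Finset V // u ∈ A})
    (hR : ∀ i, (C i).1 ∩ R = (C' i).1 ∩ R)
    (hmem : (∏ i, X (resSub L u huL (C i))) - (∏ i, X (resSub L u huL (C' i))) ∈
      cutIdeal K (addEdge (G.comap (Subtype.val : {x : V // x ∈ L} → V))
        ⟨u, huL⟩ ⟨v, hvL⟩) ⟨u, huL⟩) :
    (∏ i, X (C i)) - (∏ i, X (C' i)) ∈ cutIdeal K G u :=
  prod_X_sub_prod_X_mem_cutIdeal_of_comap_val G huL hE C C' hR
    (cutIdeal_antitone _ le_sup_left hmem)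

/-- Lifting generators of the cut ideal of `G[L] + uv`: if the cut index sets
`C₁, …, C_m` and `C₁', …, C_m'` of `G` agree on `R`, and the binomial of the
restrictions to `L` lies in the cut ideal of `G[L] + uv`, then the binomial
`∏ q_{Cᵢ} - ∏ q_{Cᵢ'}` lies in the cut ideal of `G`. -/
theorem lift_left_binomial_mem_cutIdeal
    (K : Type) [Field K] {V : Type} [Fintype V] [DecidableEq V]
    (G : SimpleGraph V) (u v : V) (huv : u ≠ v) (hadj : ¬ G.Adj u v)
    (L R : Finset V) (hLR : L ∪ R = Finset.univ) (hI : L ∩ R = {u, v})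
    (huL : u ∈ L) (hvL : v ∈ L)
    (hE : ∀ a b, G.Adj a b → (a ∈ L ∧ b ∈ L) ∨ (a ∈ R ∧ b ∈ R))
    (m : ℕ) (C C' : Fin m → {A : Finset V // u ∈ A})
    (hR : ∀ i, (C i).1 ∩ R = (C' i).1 ∩ R)
    (hmem : (∏ i, X (resSub L u huL (C i))) - (∏ i, X (resSub L u huL (C' i))) ∈
      cutIdeal K (addEdge (G.comap (Subtype.val : {x : V // x ∈ L} → V))
        ⟨u, huL⟩ ⟨v, hvL⟩) ⟨u, huL⟩) :
    (∏ i, X (C i)) - (∏ i, X (C' i)) ∈ cutIdeal K G u :=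
  lift_left_binomial_mem_cutIdeal_general K G u v L R huL hvL hE m C C' hR hmem

end
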